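/- arXiv:2507.09893 — 2 statements merged into one kernel-verified Lean document; each statement's English description precedes it below -/
import Mathlib

section
/- With notation as before ($\Lambda, C_4, C_p, |\lambda_3| > 0$, $2<p<10/3$, $\gamma_p = \frac{3(p-2)}{2p}$, $g(a,r) = \frac12 - \frac{\Lambda}{2}C_4^4 r a - \frac{2|\lambda_3|}{p} C_p^p a^{p(1-\gamma_p)} r^{p\gamma_p - 2}$, $r_a$ the unique maximum point of $g(a,\cdot)$), there exists a constant $\alpha > 0$, independent of $a$, such that $\max_{r>0} g(a,r) = g(a, r_a) = \frac12 - \alpha\, a^{4/3}$ for all $a>0$. -/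
/-!
With `s = 2 - p γ_p > 0`, `A = Λ C₄⁴ / 2`, `B = 2 |λ₃| C_p^p / p` and `φ ρ = A ρ + B ρ^(-s)`,
the exponents satisfy `p (1 - γ_p) = (4 + s) / 3`, so the substitution `r = a^(1/3) ρ` gives
`g(a, r) = 1/2 - a^(4/3) φ(ρ)`. The function `φ` is minimised on `(0, ∞)` at
`K = (s B / A)^(1/(1+s))`, where `A K = s B K^(-s)`: after writing `ρ = K t`, the inequality
`φ K ≤ φ ρ` is Bernoulli's inequality `s + 1 ≤ s t + t^(-s)`. Hence `r_a = K a^(1/3)` and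
`α = φ K`.
-/

open Set

/-- Bernoulli's inequality `t ^ (-s) ≥ 1 - s (t - 1)` for a negative exponent. -/
lemma Real.add_one_le_mul_add_rpow_neg {s t : ℝ} (hs : 0 < s) (ht : 0 < t) :
    s + 1 ≤ s * t + t ^ (-s) := by
  have hs1 : 0 < s + 1 := by linarith
  have hamgm := Real.geom_mean_le_arith_mean2_weighted (w₁ := s / (s + 1)) (w₂ := 1 / (s + 1))
    (p₁ := t) (p₂ := t ^ (-s)) (by positivity) (by positivity) ht.le (by positivity)
    (by field_simp)
  have hgeom : t ^ (s / (s + 1)) * (t ^ (-s)) ^ (1 / (s + 1)) = 1 := by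
    rw [← Real.rpow_mul ht.le, ← Real.rpow_add ht,
      show s / (s + 1) + -s * (1 / (s + 1)) = 0 by ring, Real.rpow_zero]
  rw [hgeom] at hamgm
  calc s + 1 = (s + 1) * 1 := (mul_one _).symm
    _ ≤ (s + 1) * (s / (s + 1) * t + 1 / (s + 1) * t ^ (-s)) := by gcongr
    _ = s * t + t ^ (-s) := by field_simp

lemma isMinOn_mul_add_mul_rpow_neg {A B s : ℝ} (hA : 0 < A) (hB : 0 < B) (hs : 0 < s) :
    IsMinOn (fun r => A * r + B * r ^ (-s)) (Ioi 0) ((s * B / A) ^ (1 / (1 + s))) := by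
  set C := s * B / A
  have hC : 0 < C := by positivity
  have hAC : A * C = s * B := mul_div_cancel₀ _ hA.ne'
  set K := C ^ (1 / (1 + s))
  have hK : 0 < K := by positivity
  have hKneg : K ^ (-s) = K / C := by
    rw [show -s = 1 - (1 + s) by ring, Real.rpow_sub hK, Real.rpow_one, ← Real.rpow_mul hC.le,
      one_div_mul_cancel (by linarith), Real.rpow_one]
  have hcrit : A * K = s * (B * K ^ (-s)) := by
    clear_value C K
    rw [hKneg]
    field_simp
    linear_combination hAC
  intro r (hr : 0 < r)
  obtain ⟨t, ht, rfl⟩ : ∃ t, 0 < t ∧ r = K * t := ⟨r / K, by positivity, by field_simp⟩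
  show A * K + B * K ^ (-s) ≤ A * (K * t) + B * (K * t) ^ (-s)
  calc A * K + B * K ^ (-s) = B * K ^ (-s) * (s + 1) := by rw [hcrit]; ring
    _ ≤ B * K ^ (-s) * (s * t + t ^ (-s)) :=
      mul_le_mul_of_nonneg_left (Real.add_one_le_mul_add_rpow_neg hs ht) (by positivity)
    _ = A * (K * t) + B * (K * t) ^ (-s) := by
      rw [Real.mul_rpow hK.le ht.le]
      linear_combination (-t) * hcrit

lemma mul_add_mul_rpow_neg_scaling (A B s : ℝ) {a r : ℝ} (ha : 0 < a) (hr : 0 ≤ r) :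
    A * r * a + B * a ^ ((4 + s) / 3) * r ^ (-s)
      = a ^ ((4 : ℝ) / 3) * (A * (r / a ^ ((1 : ℝ) / 3)) + B * (r / a ^ ((1 : ℝ) / 3)) ^ (-s)) := by
  obtain ⟨c, hc, rfl⟩ : ∃ c, 0 < c ∧ a = c ^ (3 : ℝ) :=
    ⟨a ^ ((1 : ℝ) / 3), by positivity, by rw [← Real.rpow_mul ha.le]; norm_num⟩
  have hcube (x : ℝ) : (c ^ (3 : ℝ)) ^ (x / 3) = c ^ x := by
    rw [← Real.rpow_mul hc.le]; ring_nf
  rw [hcube, hcube, hcube, Real.rpow_one, Real.div_rpow hr hc.le, Real.rpow_add hc,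
    Real.rpow_neg hc.le, Real.rpow_neg hr]
  norm_cast
  field_simp

/-- with `r_a` the unique maximum point of `g(a,·)`, there exists a constant
`α > 0`, independent of `a`, such that `max_{r>0} g(a,r) = g(a,r_a) = 1/2 - α a^{4/3}`
for all `a > 0`. -/
theorem stmt3 (Λ C4 Cp l3 p γp : ℝ) (g : ℝ → ℝ → ℝ) (ra : ℝ → ℝ)
    (hΛ : 0 < Λ) (hC4 : 0 < C4) (hCp : 0 < Cp) (hl3 : 0 < l3)
    (hp1 : 2 < p) (hp2 : p < 10 / 3)
    (hγ : γp = 3 * (p - 2) / (2 * p))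
    (hg : g = fun a r => 1 / 2 - Λ / 2 * C4 ^ 4 * r * a
      - 2 * l3 / p * Cp ^ p * a ^ (p * (1 - γp)) * r ^ (p * γp - 2))
    (hra : ∀ a : ℝ, 0 < a → ra a = (4 * l3 * (2 - p * γp) * Cp ^ p * a ^ ((1 - γp) * p - 1)
      / (Λ * C4 ^ 4 * p)) ^ (1 / (3 - p * γp))) :
    ∃ α : ℝ, 0 < α ∧ ∀ a : ℝ, 0 < a →
      (∀ r : ℝ, 0 < r → g a r ≤ g a (ra a)) ∧
      g a (ra a) = 1 / 2 - α * a ^ ((4 : ℝ) / 3) := by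
  have hp : 0 < p := by linarith
  have hpγ : p * γp = 3 * (p - 2) / 2 := by rw [hγ]; field_simp
  obtain ⟨s, hs, hs_def⟩ : ∃ s, 0 < s ∧ s = 2 - p * γp := ⟨_, by rw [hpγ]; linarith, rfl⟩
  obtain ⟨A, hA, hA_def⟩ : ∃ A, 0 < A ∧ A = Λ / 2 * C4 ^ 4 := ⟨_, by positivity, rfl⟩
  obtain ⟨B, hB, hB_def⟩ : ∃ B, 0 < B ∧ B = 2 * l3 / p * Cp ^ p := ⟨_, by positivity, rfl⟩
  set φ : ℝ → ℝ := fun r => A * r + B * r ^ (-s)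
  set K := (s * B / A) ^ (1 / (1 + s))
  have hg_scaled (a : ℝ) (ha : 0 < a) (r : ℝ) (hr : 0 < r) :
      g a r = 1 / 2 - a ^ ((4 : ℝ) / 3) * φ (r / a ^ ((1 : ℝ) / 3)) := by
    rw [← mul_add_mul_rpow_neg_scaling A B s ha hr.le, hg, hA_def, hB_def,
      show p * (1 - γp) = (4 + s) / 3 by rw [hs_def]; linear_combination (-2 / 3 : ℝ) * hpγ,
      show p * γp - 2 = -s by rw [hs_def]; ring]
    ring
  have hra_scaled (a : ℝ) (ha : 0 < a) : ra a = K * a ^ ((1 : ℝ) / 3) := by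
    rw [hra a ha, ← hs_def, show 3 - p * γp = 1 + s by rw [hs_def]; ring,
      show (1 - γp) * p - 1 = (1 + s) / 3 by rw [hs_def]; linear_combination (-2 / 3 : ℝ) * hpγ,
      show 4 * l3 * s * Cp ^ p * a ^ ((1 + s) / 3) / (Λ * C4 ^ 4 * p)
        = s * B / A * a ^ ((1 + s) / 3) by rw [hA_def, hB_def]; field_simp; ring,
      Real.mul_rpow (by positivity) (by positivity), ← Real.rpow_mul ha.le,
      show (1 + s) / 3 * (1 / (1 + s)) = 1 / 3 by field_simp]
  have hK_eq (a : ℝ) (ha : 0 < a) : ra a / a ^ ((1 : ℝ) / 3) = K := by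
    rw [hra_scaled a ha, mul_div_cancel_right₀ _ (by positivity)]
  refine ⟨φ K, by positivity, fun a ha => ⟨fun r hr => ?_, ?_⟩⟩
  · have hra_pos : 0 < ra a := by rw [hra_scaled a ha]; positivity
    rw [hg_scaled a ha r hr, hg_scaled a ha _ hra_pos, hK_eq a ha]
    have hmin : φ K ≤ φ (r / a ^ ((1 : ℝ) / 3)) :=
      isMinOn_mul_add_mul_rpow_neg hA hB hs (mem_Ioi.2 (by positivity))
    gcongr
  · rw [hg_scaled a ha _ (by rw [hra_scaled a ha]; positivity), hK_eq a ha, mul_comm]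
end

section
/- Let $\Upsilon_\omega(a) = \inf_{u \in W^a_{\bar r}} J_\omega(u)$ for $a \in (0,\bar a)$ and $0 \le \omega < V_*$. Then for any $\theta > 1$ with $\theta a \in (0, \bar a)$, one has the strict-type subhomogeneity $\Upsilon_\omega(\theta a) \le \theta^2\, \Upsilon_\omega(a)$. -/
/-!
The dilation `u ↦ u(s⁻² ·)` multiplies `‖u‖₂²`, `N(u)` and `‖u‖ₚᵖ` by `s⁶` but `‖∇u‖₂²` only
by `s²`; hence for `s ≥ 1` it maps `S(a)` to `S(s³a)` and `J_ω(u_s) ≤ s⁶ J_ω(u)`. With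
`s = θ^{1/3}` this gives the inequality, as long as `u_s ∈ W^{θa}_{r̄}` for every `u ∈ W^a_{r̄}` with
`J_ω(u) < 0`. The constants `ā`, `r̄` are chosen so that `g(b, r̄) > 0` for `b < ā`, so the lower
bound `J_0(v) ≥ ‖∇v‖₂² g(b, ‖∇v‖₂)` makes `J_0` positive on `∂W^b_{r̄}`. Along the path
`t ↦ u_t`, `1 ≤ t ≤ s`, the energy stays negative and `‖∇u_t‖₂ = t‖∇u‖₂` is continuous, so the
path never reaches `∂W`.
-/

open MeasureTheory Set

noncomputable section

/-- Points of `ℝ³`. -/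
abbrev E3 := EuclideanSpace ℝ (Fin 3)

/-- The dipole kernel `K(x) = (1 - 3 cos²θ(x)) / |x|³`, where `θ(x)` is the angle between
`x` and the dipole axis `(0,0,1)`, so that `cos θ(x) = x₃ / |x|`. -/
def K3 (x : E3) : ℝ := (1 - 3 * (x 2 / ‖x‖) ^ 2) / ‖x‖ ^ 3

/-- The nonlinear potential energy `N(u) = ∫ λ₁|u|⁴ + λ₂ (K ∗ |u|²)|u|² dx`. -/
def Nfun (l1 l2 : ℝ) (u : E3 → ℝ) : ℝ :=
  ∫ x : E3, (l1 * (u x) ^ 4 + l2 * (∫ y : E3, K3 (x - y) * (u y) ^ 2) * (u x) ^ 2)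

/-- `‖u‖₂² = ∫ |u|²`. -/
def massSq (u : E3 → ℝ) : ℝ := ∫ x : E3, (u x) ^ 2

/-- `‖∇u‖₂² = ∫ |∇u|²`. -/
def gradSq (u : E3 → ℝ) : ℝ := ∫ x : E3, ‖fderiv ℝ u x‖ ^ 2

/-- `‖u‖ₚᵖ = ∫ |u|ᵖ`. -/
def Pnorm (p : ℝ) (u : E3 → ℝ) : ℝ := ∫ x : E3, |u x| ^ p

/-- The energy functional
`J_ω(u) = (1/2)‖∇u‖₂² + ω‖u‖₂² + (1/2)N(u) + (2λ₃/p)‖u‖ₚᵖ`. -/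
def Jfun (ω l1 l2 l3 p : ℝ) (u : E3 → ℝ) : ℝ :=
  1 / 2 * gradSq u + ω * massSq u + 1 / 2 * Nfun l1 l2 u + 2 * l3 / p * Pnorm p u

/-- `W^a_{r̄} = {u ∈ S(a) : ‖∇u‖₂ < r̄}`. -/
def Wset (a rbar : ℝ) : Set (E3 → ℝ) :=
  {u | massSq u = a ^ 2 ∧ Real.sqrt (gradSq u) < rbar}

/-- `∂W^a_{r̄} = {u ∈ S(a) : ‖∇u‖₂ = r̄}`. -/
def bdryWset (a rbar : ℝ) : Set (E3 → ℝ) :=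
  {u | massSq u = a ^ 2 ∧ Real.sqrt (gradSq u) = rbar}

/-- The unstable regime `𝓑 = {(λ₁,λ₂) : λ₁ < (4π/3)λ₂ ≤ 0 or λ₁ < -(8π/3)λ₂ ≤ 0}`. -/
def Bset : Set (ℝ × ℝ) :=
  {q | (q.1 < 4 * Real.pi / 3 * q.2 ∧ 4 * Real.pi / 3 * q.2 ≤ 0) ∨
       (q.1 < -(8 * Real.pi / 3) * q.2 ∧ -(8 * Real.pi / 3) * q.2 ≤ 0)}

def dilate (c : ℝ) (u : E3 → ℝ) : E3 → ℝ := fun x => u (c⁻¹ • x)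

lemma integral_comp_inv_smul_E3 (f : E3 → ℝ) {c : ℝ} (hc : 0 ≤ c) :
    ∫ x : E3, f (c⁻¹ • x) = c ^ 3 * ∫ x : E3, f x := by
  rw [Measure.integral_comp_inv_smul_of_nonneg volume f hc, finrank_euclideanSpace_fin,
    smul_eq_mul]

lemma K3_smul {c : ℝ} (hc : 0 < c) (x : E3) : K3 (c • x) = (c ^ 3)⁻¹ * K3 x := by
  simp only [K3, PiLp.smul_apply, smul_eq_mul, norm_smul, Real.norm_of_nonneg hc.le,
    mul_div_mul_left _ _ hc.ne', mul_pow]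
  ring

lemma massSq_dilate (u : E3 → ℝ) {c : ℝ} (hc : 0 ≤ c) :
    massSq (dilate c u) = c ^ 3 * massSq u :=
  integral_comp_inv_smul_E3 (fun z => u z ^ 2) hc

lemma Pnorm_dilate (p : ℝ) (u : E3 → ℝ) {c : ℝ} (hc : 0 ≤ c) :
    Pnorm p (dilate c u) = c ^ 3 * Pnorm p u :=
  integral_comp_inv_smul_E3 (fun z => |u z| ^ p) hc

lemma gradSq_dilate (u : E3 → ℝ) {c : ℝ} (hc : 0 < c) :
    gradSq (dilate c u) = c * gradSq u := by
  have hpt : ∀ x, ‖fderiv ℝ (dilate c u) x‖ ^ 2 = (c ^ 2)⁻¹ * ‖fderiv ℝ u (c⁻¹ • x)‖ ^ 2 := by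
    intro x
    unfold dilate
    rw [fderiv_comp_smul, norm_smul, Real.norm_of_nonneg (by positivity)]
    ring
  rw [gradSq, funext hpt, integral_const_mul,
    integral_comp_inv_smul_E3 (fun z => ‖fderiv ℝ u z‖ ^ 2) hc.le, gradSq]
  field_simp

lemma convolution_dilate (u : E3 → ℝ) {c : ℝ} (hc : 0 < c) (x : E3) :
    ∫ y : E3, K3 (x - y) * dilate c u y ^ 2 = ∫ y : E3, K3 (c⁻¹ • x - y) * u y ^ 2 := by
  have hK : ∀ z : E3, K3 (x - c • z) = (c ^ 3)⁻¹ * K3 (c⁻¹ • x - z) := fun z => by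
    rw [← K3_smul hc, smul_sub, smul_inv_smul₀ hc.ne']
  calc ∫ y : E3, K3 (x - y) * dilate c u y ^ 2
      = ∫ y : E3, K3 (x - c • c⁻¹ • y) * u (c⁻¹ • y) ^ 2 := by
        simp only [dilate, smul_inv_smul₀ hc.ne']
    _ = c ^ 3 * ∫ z : E3, K3 (x - c • z) * u z ^ 2 :=
        integral_comp_inv_smul_E3 (fun z => K3 (x - c • z) * u z ^ 2) hc.le
    _ = ∫ y : E3, K3 (c⁻¹ • x - y) * u y ^ 2 := by
        simp only [hK, mul_assoc, integral_const_mul]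
        rw [← mul_assoc, mul_inv_cancel₀ (by positivity), one_mul]

lemma Nfun_dilate (l1 l2 : ℝ) (u : E3 → ℝ) {c : ℝ} (hc : 0 < c) :
    Nfun l1 l2 (dilate c u) = c ^ 3 * Nfun l1 l2 u := by
  simp only [Nfun, convolution_dilate u hc]
  exact integral_comp_inv_smul_E3
    (fun z => l1 * u z ^ 4 + l2 * (∫ y : E3, K3 (z - y) * u y ^ 2) * u z ^ 2) hc.le

lemma gradSq_nonneg (u : E3 → ℝ) : 0 ≤ gradSq u :=
  integral_nonneg fun _ => by positivity

lemma massSq_nonneg (u : E3 → ℝ) : 0 ≤ massSq u :=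
  integral_nonneg fun _ => by positivity

lemma Jfun_dilate_le (ω l1 l2 l3 p : ℝ) (u : E3 → ℝ) {c : ℝ} (hc : 1 ≤ c) :
    Jfun ω l1 l2 l3 p (dilate c u) ≤ c ^ 3 * Jfun ω l1 l2 l3 p u := by
  have hc0 : 0 < c := by linarith
  rw [Jfun, Jfun, massSq_dilate u hc0.le, gradSq_dilate u hc0, Nfun_dilate l1 l2 u hc0,
    Pnorm_dilate p u hc0.le]
  have hcc : c ≤ c ^ 3 := le_self_pow₀ hc (by norm_num)
  nlinarith [mul_le_mul_of_nonneg_right hcc (gradSq_nonneg u)]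

lemma Jfun_zero_le {ω : ℝ} (hω : 0 ≤ ω) (l1 l2 l3 p : ℝ) (u : E3 → ℝ) :
    Jfun 0 l1 l2 l3 p u ≤ Jfun ω l1 l2 l3 p u := by
  have := mul_nonneg hω (massSq_nonneg u)
  simp only [Jfun]
  linarith

lemma alpha_first_term_eq {c1 c2 s : ℝ} (hc1 : 0 < c1) (hc2 : 0 < c2) (hs : 1 < s) :
    1 / 2 * (2 * c1) ^ ((s - 1) / s) * (2 * ((s - 1) * c2)) ^ (1 / s)
      = c1 * ((s - 1) * c2 / c1) ^ (1 / s) := by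
  have hs1 : 0 < s - 1 := by linarith
  refine Real.log_injOn_pos (mem_Ioi.2 (by positivity)) (mem_Ioi.2 (by positivity)) ?_
  rw [Real.log_mul (by positivity) (by positivity), Real.log_mul (by positivity) (by positivity),
    Real.log_rpow (by positivity), Real.log_rpow (by positivity),
    Real.log_mul (by positivity) (by positivity), Real.log_mul (by positivity) (by positivity),
    Real.log_mul (by positivity) (by positivity), one_div, Real.log_inv,
    Real.log_mul (by positivity) (by positivity), Real.log_rpow (by positivity),
    Real.log_div (by positivity) (by positivity), Real.log_mul (by positivity) (by positivity)]
  field_simp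
  ring

lemma alpha_second_term_eq {c1 c2 s : ℝ} (hc1 : 0 < c1) (hc2 : 0 < c2) (hs : 1 < s) :
    2 * (c2 / 2) ^ (1 / s) * (2 * (s - 1) / c1) ^ ((1 - s) / s)
      = c2 * (((s - 1) * c2 / c1) ^ (1 / s)) ^ (1 - s) := by
  have hs1 : 0 < s - 1 := by linarith
  refine Real.log_injOn_pos (mem_Ioi.2 (by positivity)) (mem_Ioi.2 (by positivity)) ?_
  rw [Real.log_mul (by positivity) (by positivity), Real.log_mul (by positivity) (by positivity),
    Real.log_rpow (by positivity), Real.log_rpow (by positivity),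
    Real.log_div (by positivity) (by positivity), Real.log_div (by positivity) (by positivity),
    Real.log_mul (by positivity) (by positivity),
    Real.log_mul (by positivity) (by positivity), Real.log_rpow (by positivity),
    Real.log_rpow (by positivity), Real.log_div (by positivity) (by positivity),
    Real.log_mul (by positivity) (by positivity)]
  field_simp
  ring

lemma alpha_eq {Λ C4 Cp l3 p γp α c1 c2 s : ℝ} (hc1 : 0 < c1) (hc2 : 0 < c2) (hs1 : 1 < s)
    (hc1_def : Λ / 2 * C4 ^ 4 = c1) (hc2_def : 2 * |l3| / p * Cp ^ p = c2)
    (hs : p * γp = 3 - s)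
    (hα : α = 1 / 2 * (Λ * C4 ^ 4) ^ ((p * γp - 2) / (p * γp - 3))
        * (4 * |l3| * (2 - p * γp) * Cp ^ p / p) ^ (1 / (3 - p * γp))
      + 2 * (Cp ^ p * |l3| / p) ^ (1 / (3 - p * γp))
        * (4 * (2 - p * γp) / (Λ * C4 ^ 4)) ^ ((p * γp - 2) / (3 - p * γp))) :
    α = c1 * ((s - 1) * c2 / c1) ^ (1 / s) + c2 * (((s - 1) * c2 / c1) ^ (1 / s)) ^ (1 - s) := by
  have hΛ : Λ * C4 ^ 4 = 2 * c1 := by rw [← hc1_def]; ring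
  have e1 : (p * γp - 2) / (p * γp - 3) = (s - 1) / s := by
    rw [hs, show 3 - s - 2 = -(s - 1) by ring, show 3 - s - 3 = -s by ring, neg_div_neg_eq]
  have e2 : (p * γp - 2) / (3 - p * γp) = (1 - s) / s := by rw [hs]; ring_nf
  have e3 : 1 / (3 - p * γp) = 1 / s := by rw [hs]; ring_nf
  have b1 : 4 * |l3| * (2 - p * γp) * Cp ^ p / p = 2 * ((s - 1) * c2) := by
    rw [← hc2_def, hs]; ring
  have b2 : Cp ^ p * |l3| / p = c2 / 2 := by rw [← hc2_def]; ring
  have b3 : 4 * (2 - p * γp) / (Λ * C4 ^ 4) = 2 * (s - 1) / c1 := by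
    rw [hΛ, hs]; field_simp; ring
  rw [hα, e1, e2, e3, b1, b2, b3, hΛ, alpha_first_term_eq hc1 hc2 hs1,
    alpha_second_term_eq hc1 hc2 hs1]

lemma rbar_eq {Λ C4 Cp l3 p γp abar rbar c1 c2 s : ℝ} (hc1 : 0 < c1) (hc2 : 0 < c2)
    (hs1 : 1 < s) (habar : 0 < abar)
    (hc1_def : Λ / 2 * C4 ^ 4 = c1) (hc2_def : 2 * |l3| / p * Cp ^ p = c2)
    (hs : p * γp = 3 - s) (hexp : (1 - γp) * p - 1 = s / 3)
    (hrbar : rbar = (4 * |l3| * (2 - p * γp) * Cp ^ p * abar ^ ((1 - γp) * p - 1)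
      / (Λ * C4 ^ 4 * p)) ^ (1 / (3 - p * γp))) :
    rbar = ((s - 1) * c2 / c1) ^ (1 / s) * abar ^ ((1 : ℝ) / 3) := by
  have hK : 0 < (s - 1) * c2 / c1 := div_pos (mul_pos (by linarith) hc2) hc1
  have hbase : 4 * |l3| * (2 - p * γp) * Cp ^ p * abar ^ ((1 - γp) * p - 1) / (Λ * C4 ^ 4 * p)
      = (s - 1) * c2 / c1 * abar ^ (s / 3) := by
    rw [← hc1_def, ← hc2_def, hs, hexp]
    field_simp
    ring
  rw [hrbar, hbase, show 3 - p * γp = s by linarith, Real.mul_rpow hK.le (by positivity),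
    ← Real.rpow_mul habar.le]
  congr 2
  field_simp

-- `r̄ = Q ā^{1/3}` maximises `r ↦ g(ā, r)`, and `ā` is chosen so that this maximum is `0`.
lemma critical_identity {c1 c2 s β A Q : ℝ} (hc1 : 0 < c1) (hc2 : 0 < c2) (hA : 0 < A)
    (hQ : 0 < Q) (hβ : β + (1 - s) / 3 = 4 / 3)
    (hA43 : A ^ ((4 : ℝ) / 3) = 1 / (2 * (c1 * Q + c2 * Q ^ (1 - s)))) :
    c1 * (Q * A ^ ((1 : ℝ) / 3)) * A + c2 * A ^ β * (Q * A ^ ((1 : ℝ) / 3)) ^ (1 - s)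
      = 1 / 2 := by
  have h1 : A ^ ((1 : ℝ) / 3) * A = A ^ ((4 : ℝ) / 3) := by
    rw [← Real.rpow_add_one hA.ne']
    norm_num
  have h2 : A ^ β * (A ^ ((1 : ℝ) / 3)) ^ (1 - s) = A ^ ((4 : ℝ) / 3) := by
    rw [← Real.rpow_mul hA.le, ← Real.rpow_add hA, ← hβ]
    ring_nf
  have hsum : 0 < c1 * Q + c2 * Q ^ (1 - s) := by positivity
  calc _ = (c1 * Q + c2 * Q ^ (1 - s)) * A ^ ((4 : ℝ) / 3) := by
        rw [Real.mul_rpow hQ.le (by positivity)]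
        linear_combination (c1 * Q) * h1 + (c2 * Q ^ (1 - s)) * h2
    _ = 1 / 2 := by
        rw [hA43]
        field_simp

lemma g_pos_of_lt_abar {Λ C4 Cp l3 p γp α abar rbar : ℝ}
    (hΛ : 0 < Λ) (hC4 : 0 < C4) (hCp : 0 < Cp) (hl3 : l3 < 0)
    (hp1 : 2 < p) (hp2 : p < 10 / 3)
    (hγ : γp = 3 * (p - 2) / (2 * p))
    (hα : α = 1 / 2 * (Λ * C4 ^ 4) ^ ((p * γp - 2) / (p * γp - 3))
        * (4 * |l3| * (2 - p * γp) * Cp ^ p / p) ^ (1 / (3 - p * γp))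
      + 2 * (Cp ^ p * |l3| / p) ^ (1 / (3 - p * γp))
        * (4 * (2 - p * γp) / (Λ * C4 ^ 4)) ^ ((p * γp - 2) / (3 - p * γp)))
    (habar : abar = (1 / (2 * α)) ^ ((3 : ℝ) / 4))
    (hrbar : rbar = (4 * |l3| * (2 - p * γp) * Cp ^ p * abar ^ ((1 - γp) * p - 1)
      / (Λ * C4 ^ 4 * p)) ^ (1 / (3 - p * γp)))
    {b : ℝ} (hb : 0 < b) (hba : b < abar) :
    0 < 1 / 2 - Λ / 2 * C4 ^ 4 * rbar * b
      - 2 * |l3| / p * Cp ^ p * b ^ (p * (1 - γp)) * rbar ^ (p * γp - 2) := by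
  set c1 := Λ / 2 * C4 ^ 4 with hc1_def
  set c2 := 2 * |l3| / p * Cp ^ p with hc2_def
  set s := 3 - p * γp with hs_def
  have hc1 : 0 < c1 := by positivity
  have hc2 : 0 < c2 := by have := abs_pos.2 hl3.ne; positivity
  have hpγ : p * γp = 3 * (p - 2) / 2 := by rw [hγ]; field_simp
  have hs : p * γp = 3 - s := by ring
  have hs1 : 1 < s := by linarith
  have hβ : p * (1 - γp) = 1 + s / 3 := by linarith
  set Q := ((s - 1) * c2 / c1) ^ (1 / s)
  have hQ : 0 < Q := by
    have : 0 < s - 1 := by linarith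
    positivity
  have hαQ := alpha_eq hc1 hc2 hs1 hc1_def.symm hc2_def.symm hs hα
  have hα0 : 0 < α := by rw [hαQ]; positivity
  have habar0 : 0 < abar := by rw [habar]; positivity
  have habar43 : abar ^ ((4 : ℝ) / 3) = 1 / (2 * α) := by
    rw [habar, ← Real.rpow_mul (by positivity)]
    norm_num
  have hrbarQ : rbar = Q * abar ^ ((1 : ℝ) / 3) :=
    rbar_eq hc1 hc2 hs1 habar0 hc1_def.symm hc2_def.symm hs (by linarith) hrbar
  have hcrit : c1 * rbar * abar + c2 * abar ^ (p * (1 - γp)) * rbar ^ (p * γp - 2) = 1 / 2 := by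
    rw [hrbarQ, show p * γp - 2 = 1 - s by ring]
    exact critical_identity hc1 hc2 habar0 hQ (by linarith) (by rw [habar43, hαQ])
  have hrbar0 : 0 < rbar := by rw [hrbarQ]; positivity
  have hlin : c1 * rbar * b < c1 * rbar * abar := by gcongr
  have hpow : c2 * b ^ (p * (1 - γp)) * rbar ^ (p * γp - 2)
      < c2 * abar ^ (p * (1 - γp)) * rbar ^ (p * γp - 2) := by
    gcongr
    linarith
  linarith

def JfunLowerBound (g : ℝ → ℝ → ℝ) (l1 l2 l3 p : ℝ) : Prop :=
  ∀ (u : E3 → ℝ) (b : ℝ), 0 < b → massSq u = b ^ 2 →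
    gradSq u * g b (Real.sqrt (gradSq u)) ≤ Jfun 0 l1 l2 l3 p u

lemma massSq_dilate_sq {u : E3 → ℝ} {a : ℝ} (s : ℝ) (hu : massSq u = a ^ 2) :
    massSq (dilate (s ^ 2) u) = (s ^ 3 * a) ^ 2 := by
  rw [massSq_dilate u (by positivity), hu]
  ring

lemma sqrt_gradSq_dilate_sq (u : E3 → ℝ) {s : ℝ} (hs : 0 < s) :
    Real.sqrt (gradSq (dilate (s ^ 2) u)) = s * Real.sqrt (gradSq u) := by
  rw [gradSq_dilate u (by positivity), Real.sqrt_mul (by positivity), Real.sqrt_sq hs.le]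

lemma Jfun_pos_of_mem_bdryWset {g : ℝ → ℝ → ℝ} {l1 l2 l3 p b rbar : ℝ}
    (hJ : JfunLowerBound g l1 l2 l3 p) (hb : 0 < b) (hrbar : 0 < rbar) (hg : 0 < g b rbar)
    {u : E3 → ℝ} (hu : u ∈ bdryWset b rbar) : 0 < Jfun 0 l1 l2 l3 p u := by
  obtain ⟨hmass, hgrad⟩ := hu
  have hlow := hJ u b hb hmass
  rw [hgrad] at hlow
  have hgradSq : gradSq u = rbar ^ 2 := by rw [← hgrad, Real.sq_sqrt (gradSq_nonneg u)]
  calc 0 < gradSq u * g b rbar := by rw [hgradSq]; positivity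
    _ ≤ _ := hlow

lemma dilate_mem_Wset {g : ℝ → ℝ → ℝ} {ω l1 l2 l3 p a abar rbar s : ℝ} {u : E3 → ℝ}
    (hJ : JfunLowerBound g l1 l2 l3 p) (hω : 0 ≤ ω)
    (hg : ∀ b, 0 < b → b < abar → 0 < g b rbar) (ha : 0 < a) (hs : 1 ≤ s)
    (hsa : s ^ 3 * a < abar) (hu : u ∈ Wset a rbar) (hJu : Jfun ω l1 l2 l3 p u < 0) :
    dilate (s ^ 2) u ∈ Wset (s ^ 3 * a) rbar := by
  obtain ⟨hmass, hgrad⟩ := hu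
  refine ⟨massSq_dilate_sq _ hmass, ?_⟩
  rw [sqrt_gradSq_dilate_sq u (by linarith)]
  by_contra! hle
  set r := Real.sqrt (gradSq u)
  have hr0 : 0 ≤ r := Real.sqrt_nonneg _
  have hrbar : 0 < rbar := hr0.trans_lt hgrad
  have hr : 0 < r := by nlinarith
  -- the dilation path `t ↦ dilate (t ^ 2) u` reaches `∂W` at `t = rbar / r`
  set t := rbar / r
  have ht1 : 1 ≤ t := by rw [le_div_iff₀ hr]; linarith
  have hts : t ≤ s := by rw [div_le_iff₀ hr]; linarith
  have hbdry : dilate (t ^ 2) u ∈ bdryWset (t ^ 3 * a) rbar := by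
    refine ⟨massSq_dilate_sq _ hmass, ?_⟩
    rw [sqrt_gradSq_dilate_sq u (by linarith)]
    exact div_mul_cancel₀ rbar hr.ne'
  have hta : t ^ 3 * a < abar := lt_of_le_of_lt (by gcongr) hsa
  have hpos := Jfun_pos_of_mem_bdryWset hJ (by positivity) hrbar (hg _ (by positivity) hta) hbdry
  have hneg : (t ^ 2) ^ 3 * Jfun ω l1 l2 l3 p u < 0 := mul_neg_of_pos_of_neg (by positivity) hJu
  linarith [Jfun_zero_le hω l1 l2 l3 p (dilate (t ^ 2) u),
    Jfun_dilate_le ω l1 l2 l3 p u (one_le_pow₀ ht1 : 1 ≤ t ^ 2)]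

lemma bddBelow_Jfun_image_Wset {ω l1 l2 l3 p A B β q b rbar : ℝ}
    (hJ : JfunLowerBound (fun b r => 1 / 2 - A * r * b - B * b ^ β * r ^ (q - 2)) l1 l2 l3 p)
    (hω : 0 ≤ ω) (hA : 0 ≤ A) (hB : 0 ≤ B) (hq : 0 < q) (hb : 0 < b) :
    BddBelow (Jfun ω l1 l2 l3 p '' Wset b rbar) := by
  refine ⟨-(A * b * rbar ^ 3 + B * b ^ β * rbar ^ q), ?_⟩
  rintro _ ⟨u, ⟨hmass, hgrad⟩, rfl⟩
  have hlow := (hJ u b hb hmass).trans (Jfun_zero_le hω l1 l2 l3 p u)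
  set r := Real.sqrt (gradSq u)
  have hr0 : 0 ≤ r := Real.sqrt_nonneg _
  have hr2 : gradSq u = r ^ 2 := (Real.sq_sqrt (gradSq_nonneg u)).symm
  have hr3 : r ^ 3 ≤ rbar ^ 3 := by gcongr
  have hrq : r ^ 2 * r ^ (q - 2) ≤ rbar ^ q := by
    rcases hr0.eq_or_lt with h | h
    · rw [← h, zero_pow two_ne_zero, zero_mul]
      exact Real.rpow_nonneg (hr0.trans hgrad.le) q
    · rw [← Real.rpow_natCast, ← Real.rpow_add h, Nat.cast_ofNat, add_sub_cancel]
      exact Real.rpow_le_rpow h.le hgrad.le hq.le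
  have hsplit : r ^ 2 * (1 / 2 - A * r * b - B * b ^ β * r ^ (q - 2))
      = r ^ 2 / 2 - A * b * r ^ 3 - B * b ^ β * (r ^ 2 * r ^ (q - 2)) := by ring
  rw [hr2, hsplit] at hlow
  have hbβ : 0 ≤ B * b ^ β := by positivity
  nlinarith [mul_le_mul_of_nonneg_left hr3 (by positivity : 0 ≤ A * b),
    mul_le_mul_of_nonneg_left hrq hbβ]

lemma csInf_image_le_mul_csInf_image {α : Type*} {f : α → ℝ} {A B : Set α} {k : ℝ}
    (hk : 0 < k) (hB : BddBelow (f '' B)) (hneg : sInf (f '' A) < 0)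
    (h : ∀ x ∈ A, f x < 0 → ∃ y ∈ B, f y ≤ k * f x) :
    sInf (f '' B) ≤ k * sInf (f '' A) := by
  have hne : (f '' A).Nonempty := by
    by_contra hA
    rw [not_nonempty_iff_eq_empty] at hA
    rw [hA, Real.sInf_empty] at hneg
    exact hneg.false
  have hbound : ∀ x ∈ A, f x < 0 → sInf (f '' B) ≤ k * f x := fun x hx hfx => by
    obtain ⟨y, hy, hfy⟩ := h x hx hfx
    exact (csInf_le hB ⟨y, hy, rfl⟩).trans hfy
  obtain ⟨_, ⟨x₀, hx₀, rfl⟩, hfx₀⟩ := exists_lt_of_csInf_lt hne hneg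
  rw [← div_le_iff₀' hk]
  refine le_csInf hne ?_
  rintro _ ⟨x, hx, rfl⟩
  rw [div_le_iff₀' hk]
  rcases lt_or_ge (f x) 0 with hfx | hfx
  · exact hbound x hx hfx
  · exact (hbound x₀ hx₀ hfx₀).trans (by nlinarith)

theorem stmt16_general (Λ C4 Cp l1 l2 l3 ω p γp α a abar rbar θ : ℝ) (g : ℝ → ℝ → ℝ)
    (hΛ : 0 < Λ) (hC4 : 0 < C4) (hCp : 0 < Cp)
    (hl3 : l3 < 0)
    (hp1 : 2 < p) (hp2 : p < 10 / 3) (hω : 0 ≤ ω)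
    (hγ : γp = 3 * (p - 2) / (2 * p))
    (hg : g = fun b r => 1 / 2 - Λ / 2 * C4 ^ 4 * r * b
      - 2 * |l3| / p * Cp ^ p * b ^ (p * (1 - γp)) * r ^ (p * γp - 2))
    (hα : α = 1 / 2 * (Λ * C4 ^ 4) ^ ((p * γp - 2) / (p * γp - 3))
        * (4 * |l3| * (2 - p * γp) * Cp ^ p / p) ^ (1 / (3 - p * γp))
      + 2 * (Cp ^ p * |l3| / p) ^ (1 / (3 - p * γp))
        * (4 * (2 - p * γp) / (Λ * C4 ^ 4)) ^ ((p * γp - 2) / (3 - p * γp)))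
    (habar : abar = (1 / (2 * α)) ^ ((3 : ℝ) / 4))
    (hrbar : rbar = (4 * |l3| * (2 - p * γp) * Cp ^ p * abar ^ ((1 - γp) * p - 1)
      / (Λ * C4 ^ 4 * p)) ^ (1 / (3 - p * γp)))
    (ha : 0 < a)
    (hJlow : ∀ (u : E3 → ℝ) (b : ℝ), 0 < b → massSq u = b ^ 2 →
      gradSq u * g b (Real.sqrt (gradSq u)) ≤ Jfun 0 l1 l2 l3 p u)
    (hneg : sInf (Jfun ω l1 l2 l3 p '' Wset a rbar) < 0)
    (hθ : 1 < θ) (hθa : θ * a < abar) :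
    sInf (Jfun ω l1 l2 l3 p '' Wset (θ * a) rbar)
      ≤ θ ^ 2 * sInf (Jfun ω l1 l2 l3 p '' Wset a rbar) := by
  have hJ : JfunLowerBound g l1 l2 l3 p := hJlow
  have hg_pos : ∀ b, 0 < b → b < abar → 0 < g b rbar := fun b hb hba => by
    rw [hg]
    exact g_pos_of_lt_abar hΛ hC4 hCp hl3 hp1 hp2 hγ hα habar hrbar hb hba
  have hbdd : BddBelow (Jfun ω l1 l2 l3 p '' Wset (θ * a) rbar) := by
    have hpγ : 0 < p * γp := by rw [hγ]; field_simp; linarith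
    rw [hg] at hJ
    exact bddBelow_Jfun_image_Wset hJ hω (by positivity) (by positivity) hpγ (by positivity)
  obtain ⟨s, hs0, rfl⟩ : ∃ s : ℝ, 0 ≤ s ∧ s ^ 3 = θ :=
    ⟨θ ^ ((3 : ℕ) : ℝ)⁻¹, by positivity, Real.rpow_inv_natCast_pow (by linarith) three_ne_zero⟩
  have hs1 : 1 ≤ s := by
    by_contra! h
    linarith [pow_lt_one₀ hs0 h three_ne_zero]
  rw [show (s ^ 3) ^ 2 = (s ^ 2) ^ 3 by ring]
  exact csInf_image_le_mul_csInf_image (by positivity) hbdd hneg fun u hu hJu =>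
    ⟨_, dilate_mem_Wset hJ hω hg_pos ha hs1 hθa hu hJu,
      Jfun_dilate_le ω l1 l2 l3 p u (one_le_pow₀ hs1)⟩

/-- for `Υ_ω(a) = inf_{W^a_{r̄}} J_ω` with `a ∈ (0,ā)`, `0 ≤ ω` and
`Υ_ω(a) < 0` (which holds for `ω < V⁎`): for any `θ > 1` with `θa ∈ (0,ā)`,
`Υ_ω(θa) ≤ θ² Υ_ω(a)`. -/
theorem stmt16 (Λ C4 Cp l1 l2 l3 ω p γp α a abar rbar θ : ℝ) (g : ℝ → ℝ → ℝ)
    (hΛ : 0 < Λ) (hC4 : 0 < C4) (hCp : 0 < Cp)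
    (hB : (l1, l2) ∈ Bset) (hl3 : l3 < 0)
    (hp1 : 2 < p) (hp2 : p < 10 / 3) (hω : 0 ≤ ω)
    (hγ : γp = 3 * (p - 2) / (2 * p))
    (hg : g = fun b r => 1 / 2 - Λ / 2 * C4 ^ 4 * r * b
      - 2 * |l3| / p * Cp ^ p * b ^ (p * (1 - γp)) * r ^ (p * γp - 2))
    (hα : α = 1 / 2 * (Λ * C4 ^ 4) ^ ((p * γp - 2) / (p * γp - 3))
        * (4 * |l3| * (2 - p * γp) * Cp ^ p / p) ^ (1 / (3 - p * γp))
      + 2 * (Cp ^ p * |l3| / p) ^ (1 / (3 - p * γp))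
        * (4 * (2 - p * γp) / (Λ * C4 ^ 4)) ^ ((p * γp - 2) / (3 - p * γp)))
    (habar : abar = (1 / (2 * α)) ^ ((3 : ℝ) / 4))
    (hrbar : rbar = (4 * |l3| * (2 - p * γp) * Cp ^ p * abar ^ ((1 - γp) * p - 1)
      / (Λ * C4 ^ 4 * p)) ^ (1 / (3 - p * γp)))
    (ha : 0 < a) (haa : a < abar)
    (hJlow : ∀ (u : E3 → ℝ) (b : ℝ), 0 < b → massSq u = b ^ 2 →
      gradSq u * g b (Real.sqrt (gradSq u)) ≤ Jfun 0 l1 l2 l3 p u)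
    (hneg : sInf (Jfun ω l1 l2 l3 p '' Wset a rbar) < 0)
    (hθ : 1 < θ) (hθa : θ * a < abar) :
    sInf (Jfun ω l1 l2 l3 p '' Wset (θ * a) rbar)
      ≤ θ ^ 2 * sInf (Jfun ω l1 l2 l3 p '' Wset a rbar) :=
  stmt16_general Λ C4 Cp l1 l2 l3 ω p γp α a abar rbar θ g hΛ hC4 hCp hl3 hp1 hp2 hω hγ hg hα habar
    hrbar ha hJlow hneg hθ hθa
end
end
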